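/- For a vertex-weighted graph (G,w), the Tutte symmetric function has the expansion XB_{(G,w)} = Σ_{S ⊆ E(G)} t^{|S|} p_{λ(S)}, where λ(S) is the partition of total weights of the connected components of the spanning subgraph (V(G), S). -/

import Mathlib

open scoped Classical
open Finset

structure WGraph where
  V : Type
  E : Type
  [fV : Fintype V]
  [fE : Fintype E]
  ends : E → Sym2 V
  w : V → ℕ
  wpos : ∀ v, 0 < w v

attribute [instance] WGraph.fV WGraph.fE

namespace WGraph

variable (G : WGraph)

/-- The monomial (exponent vector) attached to a colouring. -/
noncomputable def mono (κ : G.V → ℕ) : ℕ →₀ ℕ := ∑ v : G.V, Finsupp.single (κ v) (G.w v)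

/-- A colouring is proper if the endpoints of every edge receive distinct colours. -/
def Proper {C : Type} (κ : G.V → C) : Prop := ∀ e : G.E, ¬ ((G.ends e).map κ).IsDiag

noncomputable def colorings (d : ℕ →₀ ℕ) : Finset (G.V → ℕ) :=
  (Fintype.piFinset fun _ : G.V => d.support).filter (fun κ => G.mono κ = d)

/-- The chromatic symmetric function of a vertex-weighted graph. -/
noncomputable def X (R : Type) [CommRing R] : MvPowerSeries ℕ R :=
  fun d => (((G.colorings d).filter (fun κ => G.Proper κ)).card : R)

end WGraph
namespace WGraph

/-- The number of monochromatic ("bad") edges of a colouring. -/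
noncomputable def badEdges (G : WGraph) (κ : G.V → ℕ) : ℕ :=
  (Finset.univ.filter fun e : G.E => ((G.ends e).map κ).IsDiag).card

/-- The Tutte (bad-colouring) symmetric function
`XB_{(G,w)} = Σ_κ (1+t)^{e(κ)} Π_v x_{κ(v)}^{w(v)}`, with coefficients in `ℤ[t]`. -/
noncomputable def XB (G : WGraph) : MvPowerSeries ℕ (Polynomial ℤ) :=
  fun d => ∑ κ ∈ G.colorings d, (1 + Polynomial.X) ^ G.badEdges κ

end WGraph
/-- The power sum symmetric function `p_n = Σ_k x_k^n`. -/
noncomputable def psum (R : Type) [CommRing R] (n : ℕ) : MvPowerSeries ℕ R :=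
  fun d => if ∃ k, d = Finsupp.single k n then 1 else 0

/-- `p_λ = p_{λ₁} ⋯ p_{λ_k}` for a partition `λ` given as a multiset of parts. -/
noncomputable def pProd (R : Type) [CommRing R] (M : Multiset ℕ) : MvPowerSeries ℕ R :=
  (M.map (psum R)).prod

namespace WGraph

/-- Two vertices are connected in the spanning subgraph `(V(G), S)`. -/
def connRel (G : WGraph) (S : Finset G.E) : G.V → G.V → Prop :=
  Relation.EqvGen (fun x y => ∃ e ∈ S, G.ends e = s(x, y))

/-- `λ(S)`: the multiset of total weights of the connected components of `(V(G), S)`. -/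
noncomputable def compWeights (G : WGraph) (S : Finset G.E) : Multiset ℕ :=
  ((Finset.univ : Finset G.V).image
      (fun v => Finset.univ.filter (fun u => G.connRel S v u))).val.map
    (fun c => ∑ x ∈ c, G.w x)

end WGraph

namespace WGraph

variable (G : WGraph) (S : Finset G.E)

/-- The set of connected components of `(V(G), S)`. -/
noncomputable def comps : Finset (Finset G.V) :=
  (Finset.univ : Finset G.V).image
    (fun v => Finset.univ.filter (fun u => G.connRel S v u))

/-- The connected component of a vertex. -/
noncomputable def cls (v : G.V) : Finset G.V :=
  Finset.univ.filter (fun u => G.connRel S v u)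

/-- The total weight of a set of vertices. -/
noncomputable def wt (c : Finset G.V) : ℕ := ∑ x ∈ c, G.w x

lemma mem_cls {v u : G.V} : u ∈ G.cls S v ↔ G.connRel S v u := by
  simp [cls]

lemma cls_mem_comps (v : G.V) : G.cls S v ∈ G.comps S :=
  Finset.mem_image_of_mem _ (Finset.mem_univ v)

lemma mem_comps_iff {c : Finset G.V} : c ∈ G.comps S ↔ ∃ v, G.cls S v = c := by
  simp [comps, cls]

lemma self_mem_cls (v : G.V) : v ∈ G.cls S v :=
  (G.mem_cls S).2 (Relation.EqvGen.refl v)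

lemma cls_eq_of_rel {v u : G.V} (h : G.connRel S v u) : G.cls S v = G.cls S u := by
  ext x
  simp only [mem_cls]
  exact ⟨fun hx => Relation.EqvGen.trans _ _ _ (Relation.EqvGen.symm _ _ h) hx,
         fun hx => Relation.EqvGen.trans _ _ _ h hx⟩

lemma cls_eq_of_mem {v u : G.V} (h : u ∈ G.cls S v) : G.cls S v = G.cls S u :=
  G.cls_eq_of_rel S ((G.mem_cls S).1 h)

lemma wt_pos {c : Finset G.V} (hc : c ∈ G.comps S) : 0 < G.wt c := by
  obtain ⟨v, rfl⟩ := (G.mem_comps_iff S).1 hc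
  exact lt_of_lt_of_le (G.wpos v)
    (Finset.single_le_sum (fun _ _ => Nat.zero_le _) (G.self_mem_cls S v))

lemma sum_comps {M : Type*} [AddCommMonoid M] (f : G.V → M) :
    ∑ v, f v = ∑ c ∈ G.comps S, ∑ v ∈ c, f v := by
  have hcover : (G.comps S).biUnion id = Finset.univ := by
    apply Finset.eq_univ_of_forall
    intro v
    exact Finset.mem_biUnion.2 ⟨G.cls S v, G.cls_mem_comps S v, G.self_mem_cls S v⟩
  have hdisj : ((G.comps S : Set (Finset G.V))).PairwiseDisjoint id := by
    intro c₁ h₁ c₂ h₂ hne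
    obtain ⟨v₁, rfl⟩ := (G.mem_comps_iff S).1 (by exact_mod_cast h₁)
    obtain ⟨v₂, rfl⟩ := (G.mem_comps_iff S).1 (by exact_mod_cast h₂)
    refine Finset.disjoint_left.2 fun x hx1 hx2 => hne ?_
    simp only [id] at hx1 hx2
    rw [G.cls_eq_of_mem S hx1, G.cls_eq_of_mem S hx2]
  rw [← hcover, Finset.sum_biUnion hdisj]
  simp only [id_eq]

lemma const_on_rel {κ : G.V → ℕ} (h : ∀ e ∈ S, ((G.ends e).map κ).IsDiag)
    {v u : G.V} (hr : G.connRel S v u) : κ v = κ u := by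
  induction hr with
  | rel x y hxy =>
    obtain ⟨e, he, hee⟩ := hxy
    have hd := h e he
    rw [hee, Sym2.map_pair_eq] at hd
    exact Sym2.mk_isDiag_iff.1 hd
  | refl => rfl
  | symm _ _ _ ih => exact ih.symm
  | trans _ _ _ _ _ ih1 ih2 => exact ih1.trans ih2

lemma sum_single_cls {κ : G.V → ℕ} (h : ∀ e ∈ S, ((G.ends e).map κ).IsDiag) (v₀ : G.V) :
    ∑ v ∈ G.cls S v₀, Finsupp.single (κ v) (G.w v)
      = Finsupp.single (κ v₀) (G.wt (G.cls S v₀)) := by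
  rw [wt, Finsupp.single_finset_sum]
  exact Finset.sum_congr rfl fun v hv => by
    rw [G.const_on_rel S h ((G.mem_cls S).1 hv)]

lemma mono_apply_pos (κ : G.V → ℕ) (v : G.V) : 0 < G.mono κ (κ v) := by
  rw [mono, Finsupp.finset_sum_apply]
  refine lt_of_lt_of_le (G.wpos v) ?_
  have := Finset.single_le_sum
    (f := fun u => (Finsupp.single (κ u) (G.w u)) (κ v))
    (fun _ _ => Nat.zero_le _) (Finset.mem_univ v)
  simpa using this

lemma mem_colorings {d : ℕ →₀ ℕ} {κ : G.V → ℕ} : κ ∈ G.colorings d ↔ G.mono κ = d := by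
  rw [colorings, Finset.mem_filter]
  constructor
  · exact fun h => h.2
  · intro h
    refine ⟨Fintype.mem_piFinset.2 fun v => ?_, h⟩
    rw [← h, Finsupp.mem_support_iff]
    exact (G.mono_apply_pos κ v).ne'

lemma support_sum_single_id {k n : ℕ} (hn : n ≠ 0) :
    (Finsupp.single k n).support.sum id = k := by
  rw [Finsupp.support_single_ne_zero _ hn, Finset.sum_singleton]
  rfl

lemma apply_sum_single {α M : Type*} [AddCommMonoid M] (s : Finset α) (g : α → M)
    {c : α} (hc : c ∈ s) :
    (∑ c' ∈ s, Finsupp.single c' (g c')) c = g c := by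
  classical
  rw [Finsupp.finset_sum_apply,
    Finset.sum_eq_single c (fun b _ hb => Finsupp.single_eq_of_ne' hb)
      (fun h => absurd hc h)]
  exact Finsupp.single_eq_same

/-- `φ`: from a colouring to an assignment of monomials to components. -/
noncomputable def phi (κ : G.V → ℕ) : Finset G.V →₀ (ℕ →₀ ℕ) :=
  ∑ c ∈ G.comps S, Finsupp.single c (∑ v ∈ c, Finsupp.single (κ v) (G.w v))

/-- `ψ`: from an assignment of monomials to a colouring. -/
noncomputable def psi (l : Finset G.V →₀ (ℕ →₀ ℕ)) : G.V → ℕ :=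
  fun v => ((l (G.cls S v)).support).sum id

lemma phi_apply_mem (κ : G.V → ℕ) {c : Finset G.V} (hc : c ∈ G.comps S) :
    G.phi S κ c = ∑ v ∈ c, Finsupp.single (κ v) (G.w v) :=
  apply_sum_single _ _ hc

lemma phi_apply_cls {κ : G.V → ℕ} (h : ∀ e ∈ S, ((G.ends e).map κ).IsDiag) (v : G.V) :
    G.phi S κ (G.cls S v) = Finsupp.single (κ v) (G.wt (G.cls S v)) := by
  rw [G.phi_apply_mem S κ (G.cls_mem_comps S v), G.sum_single_cls S h v]

lemma psi_apply {l : Finset G.V →₀ (ℕ →₀ ℕ)}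
    (hP : ∀ c ∈ G.comps S, ∃ k, l c = Finsupp.single k (G.wt c)) (v : G.V) :
    l (G.cls S v) = Finsupp.single (G.psi S l v) (G.wt (G.cls S v)) := by
  obtain ⟨k, hk⟩ := hP _ (G.cls_mem_comps S v)
  have hkk : G.psi S l v = k := by
    rw [psi, hk, support_sum_single_id (G.wt_pos S (G.cls_mem_comps S v)).ne']
  rw [hk, hkk]

lemma psi_diag {l : Finset G.V →₀ (ℕ →₀ ℕ)}
    (hP : ∀ c ∈ G.comps S, ∃ k, l c = Finsupp.single k (G.wt c)) :
    ∀ e ∈ S, ((G.ends e).map (G.psi S l)).IsDiag := by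
  intro e he
  have hconst : ∀ {x y : G.V}, G.connRel S x y → G.psi S l x = G.psi S l y := by
    intro x y hxy
    simp only [psi, G.cls_eq_of_rel S hxy]
  have hrep : ∀ z : Sym2 G.V, ∃ x y, z = s(x, y) := fun z =>
    Sym2.ind (fun x y => ⟨x, y, rfl⟩) z
  obtain ⟨x, y, hxy⟩ := hrep (G.ends e)
  rw [hxy, Sym2.map_pair_eq, Sym2.mk_isDiag_iff]
  exact hconst (Relation.EqvGen.rel x y ⟨e, he, hxy⟩)

lemma card_colorings_eq (d : ℕ →₀ ℕ) :
    ((G.colorings d).filter (fun κ => ∀ e ∈ S, ((G.ends e).map κ).IsDiag)).card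
      = ((Finset.finsuppAntidiag (G.comps S) d).filter
          (fun l => ∀ c ∈ G.comps S, ∃ k, l c = Finsupp.single k (G.wt c))).card := by
  apply Finset.card_bij' (fun κ _ => G.phi S κ) (fun l _ => G.psi S l)
  · -- hi : phi maps into the target
    intro κ hκ
    rw [Finset.mem_filter] at hκ ⊢
    obtain ⟨hκ1, hκ2⟩ := hκ
    have hmono := (G.mem_colorings).1 hκ1
    constructor
    · rw [Finset.mem_finsuppAntidiag]
      constructor
      · calc ∑ c ∈ G.comps S, G.phi S κ c
            = ∑ c ∈ G.comps S, ∑ v ∈ c, Finsupp.single (κ v) (G.w v) :=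
              Finset.sum_congr rfl fun c hc => G.phi_apply_mem S κ hc
          _ = G.mono κ := by rw [mono]; exact (G.sum_comps S _).symm
          _ = d := hmono
      · intro c hcsup
        obtain ⟨c', hc', hmem⟩ := Finsupp.mem_support_finset_sum c hcsup
        have : c = c' := Finset.mem_singleton.1 (Finsupp.support_single_subset hmem)
        exact this ▸ hc'
    · intro c hc
      obtain ⟨v, rfl⟩ := (G.mem_comps_iff S).1 hc
      exact ⟨κ v, G.phi_apply_cls S hκ2 v⟩
  · -- hj : psi maps into the source
    intro l hl
    rw [Finset.mem_filter] at hl ⊢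
    obtain ⟨hl1, hl2⟩ := hl
    rw [Finset.mem_finsuppAntidiag] at hl1
    obtain ⟨hsum, hsupp⟩ := hl1
    refine ⟨(G.mem_colorings).2 ?_, G.psi_diag S hl2⟩
    rw [mono, G.sum_comps S, ← hsum]
    refine Finset.sum_congr rfl fun c hc => ?_
    obtain ⟨v, rfl⟩ := (G.mem_comps_iff S).1 hc
    rw [G.sum_single_cls S (G.psi_diag S hl2) v, G.psi_apply S hl2 v]
  · -- left inverse
    intro κ hκ
    rw [Finset.mem_filter] at hκ
    funext v
    rw [psi, G.phi_apply_cls S hκ.2 v,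
      support_sum_single_id (G.wt_pos S (G.cls_mem_comps S v)).ne']
  · -- right inverse
    intro l hl
    rw [Finset.mem_filter] at hl
    obtain ⟨hl1, hl2⟩ := hl
    rw [Finset.mem_finsuppAntidiag] at hl1
    apply Finsupp.ext
    intro c
    by_cases hc : c ∈ G.comps S
    · obtain ⟨v, rfl⟩ := (G.mem_comps_iff S).1 hc
      rw [G.phi_apply_cls S (G.psi_diag S hl2) v, ← G.psi_apply S hl2 v]
    · have h1 : G.phi S (G.psi S l) c = 0 := by
        rw [phi, Finsupp.finset_sum_apply]
        exact Finset.sum_eq_zero fun c' hc' =>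
          Finsupp.single_eq_of_ne' (fun h => hc (h ▸ hc'))
      have h2 : l c = 0 := Finsupp.notMem_support_iff.1 fun h => hc (hl1.2 h)
      rw [h1, h2]

end WGraph

/-- **Subset expansion of the Tutte symmetric function**:
`XB_{(G,w)} = Σ_{S ⊆ E(G)} t^{|S|} p_{λ(S)}`. -/
theorem tutte_subset_expansion (G : WGraph) :
    G.XB = ∑ S : Finset G.E,
      (MvPowerSeries.C (σ := ℕ) (R := Polynomial ℤ) Polynomial.X) ^ S.card *
        pProd (Polynomial ℤ) (G.compWeights S) := by
  apply MvPowerSeries.ext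
  intro d
  rw [map_sum]
  have hpProd : ∀ S : Finset G.E,
      pProd (Polynomial ℤ) (G.compWeights S)
        = ∏ c ∈ G.comps S, psum (Polynomial ℤ) (G.wt c) := by
    intro S
    rw [pProd, WGraph.compWeights, Multiset.map_map]
    rfl
  have hRHS : ∀ S : Finset G.E,
      (MvPowerSeries.coeff (R := Polynomial ℤ) d)
          ((MvPowerSeries.C (σ := ℕ) (R := Polynomial ℤ) Polynomial.X) ^ S.card *
            pProd (Polynomial ℤ) (G.compWeights S))
        = Polynomial.X ^ S.card *
            (((Finset.finsuppAntidiag (G.comps S) d).filter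
              (fun l => ∀ c ∈ G.comps S, ∃ k, l c = Finsupp.single k (G.wt c))).card
             : Polynomial ℤ) := by
    intro S
    rw [← map_pow, MvPowerSeries.coeff_C_mul, hpProd S, MvPowerSeries.coeff_prod]
    congr 1
    calc ∑ l ∈ Finset.finsuppAntidiag (G.comps S) d,
          ∏ c ∈ G.comps S,
            (MvPowerSeries.coeff (R := Polynomial ℤ) (l c)) (psum (Polynomial ℤ) (G.wt c))
        = ∑ l ∈ Finset.finsuppAntidiag (G.comps S) d,
            (if ∀ c ∈ G.comps S, ∃ k, l c = Finsupp.single k (G.wt c)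
              then (1 : Polynomial ℤ) else 0) := by
          refine Finset.sum_congr rfl fun l _ => ?_
          have hcoeff : ∀ (m : ℕ →₀ ℕ) (n : ℕ),
              (MvPowerSeries.coeff (R := Polynomial ℤ) m) (psum (Polynomial ℤ) n)
                = if ∃ k, m = Finsupp.single k n then (1 : Polynomial ℤ) else 0 :=
            fun _ _ => rfl
          by_cases h : ∀ c ∈ G.comps S, ∃ k, l c = Finsupp.single k (G.wt c)
          · rw [if_pos h]
            exact Finset.prod_eq_one fun c hc => by rw [hcoeff, if_pos (h c hc)]
          · rw [if_neg h]
            push_neg at h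
            obtain ⟨c, hc, hk⟩ := h
            refine Finset.prod_eq_zero hc ?_
            rw [hcoeff, if_neg (by push_neg; exact hk)]
      _ = _ := by rw [Finset.sum_boole]
  have hXB : (MvPowerSeries.coeff (R := Polynomial ℤ) d) G.XB
      = ∑ κ ∈ G.colorings d, (1 + Polynomial.X) ^ G.badEdges κ := rfl
  rw [hXB]
  have hpow : ∀ κ : G.V → ℕ,
      ((1 + Polynomial.X : Polynomial ℤ)) ^ G.badEdges κ
        = ∑ T ∈ (Finset.univ.filter fun e : G.E => ((G.ends e).map κ).IsDiag).powerset,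
            (Polynomial.X : Polynomial ℤ) ^ T.card := by
    intro κ
    rw [WGraph.badEdges, ← Finset.prod_const, add_comm (1 : Polynomial ℤ) Polynomial.X, Finset.prod_add]
    exact Finset.sum_congr rfl fun T _ => by simp
  calc ∑ κ ∈ G.colorings d, ((1 + Polynomial.X : Polynomial ℤ)) ^ G.badEdges κ
      = ∑ κ ∈ G.colorings d,
          ∑ T ∈ (Finset.univ.filter fun e : G.E => ((G.ends e).map κ).IsDiag).powerset,
            (Polynomial.X : Polynomial ℤ) ^ T.card :=
        Finset.sum_congr rfl fun κ _ => hpow κ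
    _ = ∑ κ ∈ G.colorings d, ∑ T : Finset G.E,
          (if ∀ e ∈ T, ((G.ends e).map κ).IsDiag
            then (Polynomial.X : Polynomial ℤ) ^ T.card else 0) := by
        refine Finset.sum_congr rfl fun κ _ => ?_
        have hps : (Finset.univ.filter fun e : G.E => ((G.ends e).map κ).IsDiag).powerset
            = Finset.univ.filter
                (fun T : Finset G.E => ∀ e ∈ T, ((G.ends e).map κ).IsDiag) := by
          ext T
          simp [Finset.subset_iff]
        rw [hps, Finset.sum_filter]
    _ = ∑ T : Finset G.E, ∑ κ ∈ G.colorings d,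
          (if ∀ e ∈ T, ((G.ends e).map κ).IsDiag
            then (Polynomial.X : Polynomial ℤ) ^ T.card else 0) := Finset.sum_comm
    _ = ∑ T : Finset G.E,
          ((((G.colorings d).filter
              (fun κ => ∀ e ∈ T, ((G.ends e).map κ).IsDiag)).card : Polynomial ℤ)
            * (Polynomial.X : Polynomial ℤ) ^ T.card) := by
        refine Finset.sum_congr rfl fun T _ => ?_
        rw [← Finset.sum_filter, Finset.sum_const, nsmul_eq_mul]
    _ = _ := by
        refine Finset.sum_congr rfl fun T _ => ?_
        rw [hRHS T, G.card_colorings_eq T d, mul_comm]
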